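/- arXiv:1804.04100 — 2 statements merged into one kernel-verified Lean document; each statement's English description precedes it below -/
import Mathlib

section
/- The Kenmotsu curve with parameter b = 1 traces circles: with x₁(s) = ∫_0^s (1 + sin(hr))/√(2 + 2 sin(hr)) dr and y₁(s) = (1/h)√(2 + 2 sin(hs)), under the substitution cos(θ/2) = (h/2)y₁(s) for s ∈ (-π/(2h), π/(2h)), one has (x₁(s) - √2/h)² + y₁(s)² = 4/h² for all s in that interval. -/
/-!
Put `t = h s / 2`. Then `1 + sin (h s) = (cos t + sin t) ^ 2`, and `cos t + sin t > 0` because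
`|t| < π / 4`, so the integrand is `(cos t + sin t) / √2` and integrates to
`x₁ s = √2 / h * (sin t - cos t + 1)`, while `y₁ s = √2 / h * (cos t + sin t)`. Hence
`(x₁ s - √2 / h, y₁ s) = √2 / h * (sin t - cos t, sin t + cos t)`, of squared length `4 / h ^ 2`.
-/

open Real MeasureTheory Set

namespace Real

theorem one_add_sin_eq (x : ℝ) : 1 + sin x = (cos (x / 2) + sin (x / 2)) ^ 2 := by
  conv_lhs => rw [← mul_div_cancel₀ x two_ne_zero, sin_two_mul]
  linear_combination -sin_sq_add_cos_sq (x / 2)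

theorem cos_add_sin_eq (x : ℝ) : cos x + sin x = √2 * cos (x - π / 4) := by
  rw [cos_sub, cos_pi_div_four, sin_pi_div_four]
  linear_combination (-(cos x + sin x) / 2) * sq_sqrt (zero_le_two : (0 : ℝ) ≤ 2)

theorem cos_add_sin_pos {x : ℝ} (hx : |x| < π / 4) : 0 < cos x + sin x := by
  rw [abs_lt] at hx
  rw [cos_add_sin_eq]
  exact mul_pos (by positivity) (cos_pos_of_mem_Ioo ⟨by linarith, by linarith⟩)

theorem sqrt_two_add_two_sin {x : ℝ} (hx : |x| < π / 2) :
    √(2 + 2 * sin x) = √2 * (cos (x / 2) + sin (x / 2)) := by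
  have hpos : 0 < cos (x / 2) + sin (x / 2) :=
    cos_add_sin_pos (by rw [abs_div, abs_two]; linarith)
  rw [show 2 + 2 * sin x = 2 * (1 + sin x) by ring, one_add_sin_eq, sqrt_mul zero_le_two,
    sqrt_sq hpos.le]

theorem one_add_sin_div_sqrt_two_add_two_sin {x : ℝ} (hx : |x| < π / 2) :
    (1 + sin x) / √(2 + 2 * sin x) = (cos (x / 2) + sin (x / 2)) / √2 := by
  have hpos : 0 < cos (x / 2) + sin (x / 2) :=
    cos_add_sin_pos (by rw [abs_div, abs_two]; linarith)
  rw [sqrt_two_add_two_sin hx, one_add_sin_eq]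
  field_simp

end Real

theorem hasDerivAt_sin_sub_cos_mul_div {c : ℝ} (hc : c ≠ 0) (r : ℝ) :
    HasDerivAt (fun r => (sin (c * r) - cos (c * r)) / c) (cos (c * r) + sin (c * r)) r := by
  have hlin : HasDerivAt (fun r : ℝ => c * r) c r := by simpa using (hasDerivAt_id r).const_mul c
  refine ((((hasDerivAt_sin _).comp r hlin).sub ((hasDerivAt_cos _).comp r hlin)).div_const
    c).congr_deriv ?_
  field_simp
  ring

theorem integral_cos_mul_add_sin_mul {c : ℝ} (hc : c ≠ 0) (a b : ℝ) :
    ∫ r in a..b, (cos (c * r) + sin (c * r)) =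
      (sin (c * b) - cos (c * b) - (sin (c * a) - cos (c * a))) / c := by
  rw [intervalIntegral.integral_eq_sub_of_hasDerivAt
    (fun r _ => hasDerivAt_sin_sub_cos_mul_div hc r)
    ((by fun_prop : Continuous _).intervalIntegrable _ _)]
  ring

theorem integral_one_add_sin_div_sqrt_two_add_two_sin {h s : ℝ} (hh : h ≠ 0)
    (hs : |h * s| < π / 2) :
    ∫ r in (0 : ℝ)..s, (1 + sin (h * r)) / √(2 + 2 * sin (h * r)) =
      √2 / h * (sin (h * s / 2) - cos (h * s / 2) + 1) := by
  have hhalf : ∀ r, h * r / 2 = h / 2 * r := fun r => mul_div_right_comm h r 2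
  have hintegrand : EqOn (fun r => (1 + sin (h * r)) / √(2 + 2 * sin (h * r)))
      (fun r => (cos (h / 2 * r) + sin (h / 2 * r)) / √2) (uIcc 0 s) := by
    intro r hr
    have hrs : |h * r| ≤ |h * s| := by
      rw [abs_mul, abs_mul]
      exact mul_le_mul_of_nonneg_left (by simpa using abs_sub_left_of_mem_uIcc hr) (abs_nonneg h)
    simp only [← hhalf]
    exact one_add_sin_div_sqrt_two_add_two_sin (hrs.trans_lt hs)
  rw [intervalIntegral.integral_congr hintegrand, intervalIntegral.integral_div,
    integral_cos_mul_add_sin_mul (div_ne_zero hh two_ne_zero), ← hhalf s, mul_zero, sin_zero,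
    cos_zero]
  field_simp
  rw [sq_sqrt zero_le_two]
  ring

theorem kenmotsu_b_one_traces_circle (h : ℝ) (hh : 0 < h)
    (x₁ y₁ : ℝ → ℝ)
    (hx₁ : ∀ s : ℝ, x₁ s = ∫ r in (0:ℝ)..s, (1 + Real.sin (h * r)) / Real.sqrt (2 + 2 * Real.sin (h * r)))
    (hy₁ : ∀ s : ℝ, y₁ s = (1 / h) * Real.sqrt (2 + 2 * Real.sin (h * s))) :
    ∀ s ∈ Set.Ioo (-(π / (2 * h))) (π / (2 * h)),
      (x₁ s - Real.sqrt 2 / h) ^ 2 + (y₁ s) ^ 2 = 4 / h ^ 2 := by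
  intro s hs
  have hhs : |h * s| < π / 2 := by
    rw [abs_mul, abs_of_pos hh, ← lt_div_iff₀' hh, div_div, abs_lt]
    exact hs
  rw [hx₁, hy₁, integral_one_add_sin_div_sqrt_two_add_two_sin hh.ne' hhs,
    sqrt_two_add_two_sin hhs]
  field_simp
  rw [sq_sqrt zero_le_two]
  linear_combination 4 * sin_sq_add_cos_sq (h * s / 2)
end

section
/- For N ≥ 2 and α ∈ (0,1), the nonlocal mean curvature of the unit sphere S^{N-1} ⊂ ℝ^N, given at p ∈ S^{N-1} by the principal value H = lim_{ε→0} ∫_{ℝ^N\B_ε(p)} τ_B(y)|y-p|^{-(N+α)} dy with B the open unit ball, exists, is independent of the point p, and is strictly positive. -/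
/-!
Let `R` be the reflection across the hyperplane tangent to the sphere at `p`, and let
`w(y) = ‖y - p‖^(-s)` with `s = N + α`. `R` preserves `w` and the truncation domains `(B_ε(p))ᶜ`
and maps the unit ball `B` into its complement, so the negative contribution of `B` to `∫ τ_B w`
cancels against that of `R(B)`: what remains is `∫ w` over the set `D` of points lying outside
both `B` and `R(B)`. Near `p`, `D` lies in the slab `|⟪y, p⟫ - 1| ≤ ‖y - p‖² / 2`, whose
intersection with `B_r(p)` has volume `O(r^(N+1))`; summing over dyadic shells, `w` is integrable
on `D` because `s < N + 1`. Hence the principal value is the absolutely convergent integral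
`∫_D w`, which is positive, and it does not depend on `p` because a reflection of `ℝ^N` carries
any unit vector to any other.
-/

open MeasureTheory Filter

/-- For `E ⊆ ℝ^N`, `τ_E = 1_{ℝ^N \ E} - 1_E`. -/
noncomputable def tauInd {X : Type*} (E : Set X) (x : X) : ℝ :=
  Set.indicator Eᶜ (fun _ => (1:ℝ)) x - Set.indicator E (fun _ => (1:ℝ)) x

open Metric Set Topology
open scoped RealInnerProductSpace

section DyadicShells

variable {E : Type*} [NormedAddCommGroup E] [MeasurableSpace E] [OpensMeasurableSpace E]
  {μ : Measure E} {S : Set E} {s m C : ℝ}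

theorem setLIntegral_norm_sub_rpow_neg_dyadicShell_le (hS : MeasurableSet S) (p : E) (hs : 0 ≤ s)
    (hμ : ∀ r, 0 < r → r ≤ 1 → μ (S ∩ closedBall p r) ≤ ENNReal.ofReal (C * r ^ m)) (k : ℕ) :
    ∫⁻ y in (S ∩ closedBall p (2⁻¹ ^ k)) \ closedBall p (2⁻¹ ^ (k + 1)),
        ENNReal.ofReal (‖y - p‖ ^ (-s)) ∂μ
      ≤ ENNReal.ofReal (C * 2 ^ s) * ENNReal.ofReal (2 ^ s * (2 ^ m)⁻¹) ^ k := by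
  set T := (S ∩ closedBall p (2⁻¹ ^ k)) \ closedBall p (2⁻¹ ^ (k + 1))
  have hpow : ∀ (t : ℝ) (j : ℕ), ((2 : ℝ)⁻¹ ^ j) ^ t = ((2 ^ t)⁻¹) ^ j := fun t j => by
    rw [← Real.rpow_pow_comm (by norm_num), Real.inv_rpow zero_le_two]
  calc _ ≤ ∫⁻ _ in T, ENNReal.ofReal (((2 : ℝ)⁻¹ ^ (k + 1)) ^ (-s)) ∂μ := by
        have hT : MeasurableSet T := (hS.inter measurableSet_closedBall).diff measurableSet_closedBall
        refine setLIntegral_mono' hT fun y hy => ENNReal.ofReal_le_ofReal (Real.rpow_le_rpow_of_nonpos (by positivity) ?_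
            (neg_nonpos.2 hs))
        exact (not_le.1 (mt mem_closedBall_iff_norm.2 hy.2)).le
    _ = ENNReal.ofReal (((2 : ℝ)⁻¹ ^ (k + 1)) ^ (-s)) * μ T := setLIntegral_const _ _
    _ ≤ ENNReal.ofReal (((2 : ℝ)⁻¹ ^ (k + 1)) ^ (-s))
          * ENNReal.ofReal (C * ((2 : ℝ)⁻¹ ^ k) ^ m) := by
        gcongr
        exact (measure_mono sdiff_subset).trans
          (hμ _ (by positivity) (pow_le_one₀ (by norm_num) (by norm_num)))
    _ = ENNReal.ofReal (C * 2 ^ s) * ENNReal.ofReal (2 ^ s * (2 ^ m)⁻¹) ^ k := by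
        rw [← ENNReal.ofReal_mul (by positivity), ← ENNReal.ofReal_pow (by positivity),
          ← ENNReal.ofReal_mul' (by positivity), hpow, hpow, Real.rpow_neg zero_le_two, inv_inv]
        congr 1
        ring

theorem integrableOn_norm_sub_rpow_neg_inter_closedBall [NullSingletonClass μ]
    (hS : MeasurableSet S) (p : E) (hs : 0 ≤ s) (hsm : s < m)
    (hμ : ∀ r, 0 < r → r ≤ 1 → μ (S ∩ closedBall p r) ≤ ENNReal.ofReal (C * r ^ m)) :
    IntegrableOn (fun y => ‖y - p‖ ^ (-s)) (S ∩ closedBall p 1) μ := by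
  set T : ℕ → Set E := fun k => (S ∩ closedBall p (2⁻¹ ^ k)) \ closedBall p (2⁻¹ ^ (k + 1))
  set ρ : ℝ := 2 ^ s * (2 ^ m)⁻¹ with hρ_def
  have hρ : ENNReal.ofReal ρ < 1 := by
    rw [ENNReal.ofReal_lt_one, hρ_def, ← div_eq_mul_inv, div_lt_one (by positivity)]
    exact Real.rpow_lt_rpow_of_exponent_lt one_lt_two hsm
  have hcover : (S ∩ closedBall p 1) \ {p} ⊆ ⋃ k, T k := by
    rintro y ⟨⟨hyS, hy1⟩, hyp⟩
    obtain ⟨k, hk1, hk⟩ := exists_nat_pow_near_of_lt_one (norm_pos_iff.2 (sub_ne_zero.2 hyp))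
      (mem_closedBall_iff_norm.1 hy1) (by norm_num : (0 : ℝ) < 2⁻¹) (by norm_num)
    exact mem_iUnion.2 ⟨k, ⟨hyS, mem_closedBall_iff_norm.2 hk⟩,
      fun h => (mem_closedBall_iff_norm.1 h).not_gt hk1⟩
  refine ⟨((continuous_norm.comp (continuous_sub_right p)).measurable.pow_const _)
    |>.aestronglyMeasurable, ?_⟩
  rw [hasFiniteIntegral_iff_ofReal (ae_of_all _ fun y => by positivity)]
  calc ∫⁻ y in S ∩ closedBall p 1, ENNReal.ofReal (‖y - p‖ ^ (-s)) ∂μ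
      = ∫⁻ y in (S ∩ closedBall p 1) \ {p}, ENNReal.ofReal (‖y - p‖ ^ (-s)) ∂μ :=
        setLIntegral_congr (sdiff_null_ae_eq_self (measure_singleton p)).symm
    _ ≤ ∑' k, ∫⁻ y in T k, ENNReal.ofReal (‖y - p‖ ^ (-s)) ∂μ :=
        (lintegral_mono_set hcover).trans (lintegral_iUnion_le _ _)
    _ ≤ ∑' k, ENNReal.ofReal (C * 2 ^ s) * ENNReal.ofReal ρ ^ k :=
        ENNReal.tsum_le_tsum (setLIntegral_norm_sub_rpow_neg_dyadicShell_le hS p hs hμ)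
    _ < ⊤ := by
        rw [ENNReal.tsum_mul_left, ENNReal.tsum_geometric]
        exact ENNReal.mul_lt_top ENNReal.ofReal_lt_top (ENNReal.inv_lt_top.2 (tsub_pos_of_lt hρ))

end DyadicShells

theorem tendsto_setIntegral_compl_ball_inter {X G : Type*} [MetricSpace X]
    [MeasurableSpace X] [OpensMeasurableSpace X] [NormedAddCommGroup G] [NormedSpace ℝ G]
    {μ : Measure X} [NullSingletonClass μ] {f : X → G} {S : Set X} (hf : IntegrableOn f S μ)
    (p : X) :
    Tendsto (fun ε => ∫ y in (ball p ε)ᶜ ∩ S, f y ∂μ) (𝓝[>] 0) (𝓝 (∫ y in S, f y ∂μ)) := by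
  have hind : ∀ ε, ∫ y in (ball p ε)ᶜ ∩ S, f y ∂μ = ∫ y in S, (ball p ε)ᶜ.indicator f y ∂μ :=
    fun ε => by rw [setIntegral_indicator measurableSet_ball.compl, inter_comm]
  simp_rw [hind]
  refine tendsto_integral_filter_of_dominated_convergence (‖f ·‖)
    (.of_forall fun ε => hf.aestronglyMeasurable.indicator measurableSet_ball.compl)
    (.of_forall fun ε => ae_of_all _ fun y => norm_indicator_le_norm_self _ _) hf.norm ?_
  filter_upwards [ae_restrict_of_ae (compl_mem_ae_iff.2 (measure_singleton p))] with y hy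
  refine tendsto_const_nhds.congr' ?_
  filter_upwards [Ioo_mem_nhdsGT (dist_pos.2 hy)] with ε hε
  exact (indicator_of_mem (show y ∈ (ball p ε)ᶜ from not_lt.2 hε.2.le) f).symm

section TangentReflection

variable {E : Type*} [NormedAddCommGroup E] [InnerProductSpace ℝ E]

/-- Reflection across the hyperplane `⟪y, p⟫ = ‖p‖ ^ 2`, which is tangent at `p` to the sphere
of radius `‖p‖`. -/
noncomputable def tangentReflection (p : E) : E ≃ₜ E :=
  (ℝ ∙ p)ᗮ.reflection.toHomeomorph.trans (Homeomorph.addRight ((2 : ℝ) • p))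

theorem tangentReflection_apply (p y : E) :
    tangentReflection p y = (ℝ ∙ p)ᗮ.reflection y + (2 : ℝ) • p :=
  rfl

theorem tangentReflection_sub_self (p y : E) :
    tangentReflection p y - p = (ℝ ∙ p)ᗮ.reflection (y - p) := by
  rw [tangentReflection_apply, map_sub, Submodule.reflection_orthogonalComplement_singleton_eq_neg]
  module

theorem norm_tangentReflection_sub_self (p y : E) : ‖tangentReflection p y - p‖ = ‖y - p‖ := by
  rw [tangentReflection_sub_self, LinearIsometryEquiv.norm_map]

theorem tangentReflection_tangentReflection (p y : E) :
    tangentReflection p (tangentReflection p y) = y := by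
  simp only [tangentReflection_apply, map_add, map_smul, Submodule.reflection_reflection,
    Submodule.reflection_orthogonalComplement_singleton_eq_neg]
  module

theorem norm_tangentReflection_sq (p y : E) :
    ‖tangentReflection p y‖ ^ 2 = ‖y‖ ^ 2 + 4 * (‖p‖ ^ 2 - ⟪y, p⟫) := by
  have h : ⟪(ℝ ∙ p)ᗮ.reflection y, p⟫ = -⟪y, p⟫ := by
    have := (ℝ ∙ p)ᗮ.reflection.inner_map_map y p
    rw [Submodule.reflection_orthogonalComplement_singleton_eq_neg, inner_neg_right] at this
    linarith
  rw [tangentReflection_apply, norm_add_sq_real, LinearIsometryEquiv.norm_map, inner_smul_right, h,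
    norm_smul, Real.norm_two]
  ring

theorem one_lt_norm_tangentReflection {p y : E} (hp : ‖p‖ = 1) (hy : ‖y‖ < 1) :
    1 < ‖tangentReflection p y‖ := by
  have h := norm_tangentReflection_sq p y
  have := real_inner_le_norm y p
  rw [hp] at h this
  nlinarith [norm_nonneg (tangentReflection p y), norm_nonneg y]

/-- Off this set, the contributions of the unit ball and of its mirror image to `∫ τ_B w` cancel. -/
def tangentExterior (p : E) : Set E :=
  (ball 0 1)ᶜ ∩ tangentReflection p ⁻¹' (ball 0 1)ᶜ

theorem mem_tangentExterior {p y : E} :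
    y ∈ tangentExterior p ↔ 1 ≤ ‖y‖ ∧ 1 ≤ ‖tangentReflection p y‖ := by
  simp [tangentExterior]

theorem measurableSet_tangentExterior [MeasurableSpace E] [OpensMeasurableSpace E] (p : E) :
    MeasurableSet (tangentExterior p) :=
  (isOpen_ball.isClosed_compl.inter
    (isOpen_ball.isClosed_compl.preimage (tangentReflection p).continuous)).measurableSet

theorem mem_tangentExterior_of_inner_le {p y : E} (hy : 1 ≤ ‖y‖) (hyp : ⟪y, p⟫ ≤ ‖p‖ ^ 2) :
    y ∈ tangentExterior p := by
  refine mem_tangentExterior.2 ⟨hy, ?_⟩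
  have := norm_tangentReflection_sq p y
  nlinarith [norm_nonneg (tangentReflection p y)]

theorem two_mul_abs_inner_sub_one_le_of_mem_tangentExterior {p y : E} (hp : ‖p‖ = 1)
    (hy : y ∈ tangentExterior p) : 2 * |⟪y, p⟫ - 1| ≤ ‖y - p‖ ^ 2 := by
  obtain ⟨hy, hRy⟩ := mem_tangentExterior.1 hy
  rw [← le_div_iff₀' two_pos, abs_le]
  have hR := norm_tangentReflection_sq p y
  have hsub := norm_sub_sq_real y p
  rw [hp] at hR hsub
  have h1 : 1 ≤ ‖y‖ ^ 2 := one_le_pow₀ hy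
  have h2 : 1 ≤ ‖tangentReflection p y‖ ^ 2 := one_le_pow₀ hRy
  constructor <;> linarith

theorem setIntegral_tangentExterior_pos [MeasurableSpace E] {μ : Measure E} [μ.IsOpenPosMeasure]
    {p : E} (hp : ‖p‖ = 1) {s : ℝ}
    (hint : IntegrableOn (fun y => ‖y - p‖ ^ (-s)) (tangentExterior p) μ) :
    0 < ∫ y in tangentExterior p, ‖y - p‖ ^ (-s) ∂μ := by
  rw [setIntegral_pos_iff_support_of_nonneg_ae (ae_of_all _ fun y => by positivity) hint]
  -- the ball `B_1(-2p)` lies in `tangentExterior p` and does not contain `p`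
  refine (measure_ball_pos μ (-(2 : ℝ) • p) one_pos).trans_le (measure_mono fun y hy => ?_)
  have hy' : ‖y + (2 : ℝ) • p‖ < 1 := by simpa [dist_eq_norm] using hy
  have h2p : ‖(2 : ℝ) • p‖ = 2 := by rw [norm_smul, hp]; norm_num
  have hinner : ⟪y, p⟫ < -1 := by
    have := real_inner_le_norm (y + (2 : ℝ) • p) p
    rw [inner_add_left, real_inner_smul_left, real_inner_self_eq_norm_sq, hp, one_pow, mul_one,
      mul_one] at this
    linarith
  have hy1 : 1 ≤ ‖y‖ := by
    have := norm_sub_le (y + (2 : ℝ) • p) y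
    rw [add_sub_cancel_left, h2p] at this
    linarith
  refine ⟨(Real.rpow_pos_of_pos (norm_pos_iff.2 (sub_ne_zero.2 fun hyp => ?_)) _).ne',
    mem_tangentExterior_of_inner_le hy1 (by rw [hp]; linarith)⟩
  rw [hyp, real_inner_self_eq_norm_sq, hp] at hinner
  linarith

end TangentReflection

section Volume

variable {E : Type*} [NormedAddCommGroup E] [InnerProductSpace ℝ E] [FiniteDimensional ℝ E]
  [MeasurableSpace E] [BorelSpace E]

theorem measurePreserving_tangentReflection (p : E) : MeasurePreserving (tangentReflection p) :=
  (measurePreserving_add_right volume _).comp (LinearIsometryEquiv.measurePreserving _)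

theorem setIntegral_tauInd_mul_eq_setIntegral_tangentExterior {p : E} (hp : ‖p‖ = 1) {A : Set E}
    (hRA : tangentReflection p ⁻¹' A = A) {w : E → ℝ}
    (hw : ∀ y, w (tangentReflection p y) = w y) (hwA : IntegrableOn w A) :
    ∫ y in A, tauInd (ball 0 1) y * w y = ∫ y in A ∩ tangentExterior p, w y := by
  set B : Set E := ball 0 1
  set R := tangentReflection p
  have hB : MeasurableSet B := measurableSet_ball
  have hτ : ∀ y, tauInd B y * w y = Bᶜ.indicator w y - B.indicator w y := fun y => by
    by_cases h : y ∈ B <;> simp [tauInd, h]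
  have hRB : R ⁻¹' B ⊆ Bᶜ := fun y hy => by
    have := one_lt_norm_tangentReflection hp (mem_ball_zero_iff.1 hy)
    rw [tangentReflection_tangentReflection] at this
    simpa [B] using this.le
  have hinside : ∫ y in A ∩ B, w y = ∫ y in A ∩ R ⁻¹' B, w y := by
    rw [← (measurePreserving_tangentReflection p).setIntegral_preimage_emb
      R.measurableEmbedding, preimage_inter, hRA]
    simp only [R, hw]
  have houtside : ∫ y in A ∩ Bᶜ, w y
      = (∫ y in A ∩ R ⁻¹' B, w y) + ∫ y in A ∩ tangentExterior p, w y := by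
    have hcap : A ∩ Bᶜ ∩ R ⁻¹' B = A ∩ R ⁻¹' B := by rw [inter_assoc, inter_eq_right.2 hRB]
    have hdiff : (A ∩ Bᶜ) \ R ⁻¹' B = A ∩ tangentExterior p := by
      rw [sdiff_eq, inter_assoc, ← preimage_compl]
      rfl
    rw [← integral_inter_add_sdiff (R.continuous.measurable hB) (hwA.mono_set inter_subset_left),
      hcap, hdiff]
  calc ∫ y in A, tauInd B y * w y
      = (∫ y in A, Bᶜ.indicator w y) - ∫ y in A, B.indicator w y := by
        simp only [hτ]
        exact integral_sub (hwA.indicator hB.compl) (hwA.indicator hB)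
    _ = ∫ y in A ∩ tangentExterior p, w y := by
        rw [setIntegral_indicator hB.compl, setIntegral_indicator hB, houtside, hinside]
        ring

theorem integrableOn_norm_sub_rpow_neg_compl_ball (p : E) {s ε : ℝ}
    (hs : (Module.finrank ℝ E : ℝ) < s) (hε : 0 < ε) :
    IntegrableOn (fun y => ‖y - p‖ ^ (-s)) (ball p ε)ᶜ := by
  have hdom : Integrable fun y : E => ((1 + ε) / ε) ^ s * (1 + ‖y - p‖) ^ (-s) :=
    ((integrable_one_add_norm hs).comp_sub_right p).const_mul _
  refine hdom.integrableOn.mono' (Measurable.aestronglyMeasurable (by fun_prop))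
    ((ae_restrict_iff' measurableSet_ball.compl).2 (ae_of_all _ fun y hy => ?_))
  have hεy : ε ≤ ‖y - p‖ := by simpa [dist_eq_norm] using hy
  have hy0 : 0 < ‖y - p‖ := hε.trans_le hεy
  have hs0 : 0 ≤ s := (Nat.cast_nonneg _).trans hs.le
  have hcmp : 1 + ‖y - p‖ ≤ (1 + ε) / ε * ‖y - p‖ := by
    rw [div_mul_eq_mul_div, le_div_iff₀ hε]
    nlinarith
  have hpow : (1 + ‖y - p‖) ^ s ≤ ‖y - p‖ ^ s * ((1 + ε) / ε) ^ s := by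
    rw [← Real.mul_rpow hy0.le (by positivity), mul_comm]
    exact Real.rpow_le_rpow (by positivity) hcmp hs0
  rw [Real.norm_of_nonneg (by positivity), Real.rpow_neg hy0.le, Real.rpow_neg (by positivity),
    ← div_eq_mul_inv, le_div_iff₀ (by positivity), inv_mul_le_iff₀ (by positivity)]
  exact hpow

/-- `H_α(S^{N-1}; p)` is the limit of `nmcTruncated p (N + α) ε` as `ε → 0⁺`. -/
noncomputable def nmcTruncated (p : E) (s ε : ℝ) : ℝ :=
  ∫ y in (ball p ε)ᶜ, tauInd (ball (0 : E) 1) y * ‖y - p‖ ^ (-s)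

theorem nmcTruncated_eq_setIntegral_tangentExterior {p : E} (hp : ‖p‖ = 1) {s ε : ℝ}
    (hs : (Module.finrank ℝ E : ℝ) < s) (hε : 0 < ε) :
    nmcTruncated p s ε = ∫ y in (ball p ε)ᶜ ∩ tangentExterior p, ‖y - p‖ ^ (-s) := by
  refine setIntegral_tauInd_mul_eq_setIntegral_tangentExterior hp ?_
    (fun y => by rw [norm_tangentReflection_sub_self])
    (integrableOn_norm_sub_rpow_neg_compl_ball p hs hε)
  ext y
  simp [dist_eq_norm, norm_tangentReflection_sub_self]

theorem nmcTruncated_map_linearIsometryEquiv (e : E ≃ₗᵢ[ℝ] E) (p : E) (s ε : ℝ) :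
    nmcTruncated (e p) s ε = nmcTruncated p s ε := by
  have hball : ∀ (x : E) r, e ⁻¹' ball (e x) r = ball x r := fun x r => by
    rw [e.preimage_ball, e.symm_apply_apply]
  rw [nmcTruncated, ← e.measurePreserving.setIntegral_preimage_emb
    e.toHomeomorph.measurableEmbedding, preimage_compl, hball, nmcTruncated]
  congr 1 with y
  have hτ : tauInd (ball 0 1) (e y) = tauInd (ball 0 1) y := by
    change tauInd (e ⁻¹' ball 0 1) y = _
    rw [e.preimage_ball, map_zero]
  rw [hτ, ← map_sub, e.norm_map]

theorem nmcTruncated_eq_of_norm_eq {p q : E} (h : ‖p‖ = ‖q‖) (s ε : ℝ) :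
    nmcTruncated p s ε = nmcTruncated q s ε := by
  rw [← Submodule.reflection_sub h, nmcTruncated_map_linearIsometryEquiv]

end Volume

section Euclidean

variable {n : ℕ}

local notation "e₀" => EuclideanSpace.single (0 : Fin (n + 1)) (1 : ℝ)

theorem volume_closedBall_inter_slab_le {r : ℝ} (hr : 0 ≤ r) :
    volume (closedBall e₀ r ∩ {y | |⟪y, e₀⟫ - 1| ≤ r ^ 2 / 2})
      ≤ ENNReal.ofReal (2 ^ n * r ^ (n + 2)) := by
  set c : Fin (n + 1) → ℝ := Fin.cons (r ^ 2 / 2) fun _ => r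
  have hsub : closedBall e₀ r ∩ {y | |⟪y, e₀⟫ - 1| ≤ r ^ 2 / 2}
      ⊆ WithLp.ofLp ⁻¹' Icc (WithLp.ofLp e₀ - c) (WithLp.ofLp e₀ + c) := by
    rintro y ⟨hball, hslab⟩
    have hcoord : ∀ i, |y i - e₀ i| ≤ c i := by
      refine Fin.cases ?_ fun j => ?_
      · simpa [c, EuclideanSpace.inner_single_right] using hslab
      · calc |y j.succ - e₀ j.succ| = ‖(y - e₀) j.succ‖ := by simp
          _ ≤ ‖y - e₀‖ := PiLp.norm_apply_le _ _
          _ ≤ r := mem_closedBall_iff_norm.1 hball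
          _ = c j.succ := rfl
    refine ⟨fun i => ?_, fun i => ?_⟩ <;> simp only [Pi.add_apply, Pi.sub_apply] <;>
      linarith [abs_le.1 (hcoord i)]
  calc _ ≤ volume (WithLp.ofLp ⁻¹' Icc (WithLp.ofLp e₀ - c) (WithLp.ofLp e₀ + c)) :=
        measure_mono hsub
    _ = volume (Icc (WithLp.ofLp e₀ - c) (WithLp.ofLp e₀ + c)) :=
        (EuclideanSpace.volume_preserving_symm_measurableEquiv_toLp _).measure_preimage_equiv _
    _ = ∏ i, ENNReal.ofReal (2 * c i) := by
        rw [Real.volume_Icc_pi]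
        congr 1 with i
        simp only [Pi.add_apply, Pi.sub_apply]
        ring_nf
    _ = ENNReal.ofReal (2 ^ n * r ^ (n + 2)) := by
        simp only [Fin.prod_univ_succ, c, Fin.cons_zero, Fin.cons_succ, Finset.prod_const,
          Finset.card_univ, Fintype.card_fin]
        rw [← ENNReal.ofReal_pow (by positivity), ← ENNReal.ofReal_mul (by positivity)]
        ring_nf

theorem volume_tangentExterior_inter_closedBall_le {r : ℝ} (hr : 0 ≤ r) :
    volume (tangentExterior e₀ ∩ closedBall e₀ r) ≤ ENNReal.ofReal (2 ^ n * r ^ (n + 2)) := by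
  refine (measure_mono fun y hy => ?_).trans (volume_closedBall_inter_slab_le hr)
  refine ⟨hy.2, ?_⟩
  have hslab := two_mul_abs_inner_sub_one_le_of_mem_tangentExterior (by simp) hy.1
  have hyr : ‖y - e₀‖ ≤ r := mem_closedBall_iff_norm.1 hy.2
  have : ‖y - e₀‖ ^ 2 ≤ r ^ 2 := pow_le_pow_left₀ (norm_nonneg _) hyr 2
  change |⟪y, e₀⟫ - 1| ≤ r ^ 2 / 2
  linarith

theorem integrableOn_tangentExterior {s : ℝ} (hs : (n + 1 : ℝ) < s) (hs' : s < n + 2) :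
    IntegrableOn (fun y => ‖y - e₀‖ ^ (-s)) (tangentExterior e₀) := by
  rw [← inter_union_sdiff (tangentExterior e₀) (closedBall e₀ 1)]
  refine IntegrableOn.union ?_ ?_
  · refine integrableOn_norm_sub_rpow_neg_inter_closedBall (measurableSet_tangentExterior _) _
      (C := 2 ^ n) (by linarith) hs' fun r hr _ => ?_
    rw [show (n : ℝ) + 2 = ((n + 2 : ℕ) : ℝ) by push_cast; ring, Real.rpow_natCast]
    exact volume_tangentExterior_inter_closedBall_le hr.le
  · refine (integrableOn_norm_sub_rpow_neg_compl_ball e₀ ?_ one_pos).mono_set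
      fun y hy hball => hy.2 (ball_subset_closedBall hball)
    rwa [finrank_euclideanSpace_fin, Nat.cast_succ]

end Euclidean

theorem nmc_of_unit_sphere_general (N : ℕ) (α : ℝ) (hα : α ∈ Set.Ioo (0:ℝ) 1) :
    ∃ H : ℝ, 0 < H ∧ ∀ p : EuclideanSpace ℝ (Fin N), ‖p‖ = 1 →
      Tendsto (fun ε : ℝ =>
          ∫ y in (Metric.ball p ε)ᶜ,
            tauInd (Metric.ball (0 : EuclideanSpace ℝ (Fin N)) 1) y * ‖y - p‖ ^ (-((N:ℝ) + α)))
        (nhdsWithin 0 (Set.Ioi 0)) (nhds H) := by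
  obtain _ | n := N
  · exact ⟨1, one_pos, fun p hp => by simp [Subsingleton.elim p 0] at hp⟩
  set e₀ := EuclideanSpace.single (0 : Fin (n + 1)) (1 : ℝ)
  have he₀ : ‖e₀‖ = 1 := by simp [e₀]
  have hs : (Module.finrank ℝ (EuclideanSpace ℝ (Fin (n + 1))) : ℝ) < (n + 1 : ℕ) + α := by
    rw [finrank_euclideanSpace_fin]
    linarith [hα.1]
  have hint : IntegrableOn (fun y => ‖y - e₀‖ ^ (-(((n + 1 : ℕ) : ℝ) + α))) (tangentExterior e₀) :=
    integrableOn_tangentExterior (by push_cast; linarith [hα.1]) (by push_cast; linarith [hα.2])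
  refine ⟨_, setIntegral_tangentExterior_pos he₀ hint, fun p hp => ?_⟩
  refine (tendsto_setIntegral_compl_ball_inter hint e₀).congr' ?_
  filter_upwards [self_mem_nhdsWithin] with ε hε
  rw [← nmcTruncated_eq_setIntegral_tangentExterior he₀ hs hε,
    nmcTruncated_eq_of_norm_eq (he₀.trans hp.symm)]
  rfl

theorem nmc_of_unit_sphere (N : ℕ) (hN : 2 ≤ N) (α : ℝ) (hα : α ∈ Set.Ioo (0:ℝ) 1) :
    ∃ H : ℝ, 0 < H ∧ ∀ p : EuclideanSpace ℝ (Fin N), ‖p‖ = 1 →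
      Tendsto (fun ε : ℝ =>
          ∫ y in (Metric.ball p ε)ᶜ,
            tauInd (Metric.ball (0 : EuclideanSpace ℝ (Fin N)) 1) y * ‖y - p‖ ^ (-((N:ℝ) + α)))
        (nhdsWithin 0 (Set.Ioi 0)) (nhds H) :=
  nmc_of_unit_sphere_general N α hα
end
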